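/- arXiv:1307.2028 — 12 statements merged into one kernel-verified Lean document; each statement's English description precedes it below -/
import Mathlib

section
/- Soundness of rule S1 (root preservation): Let p and q be distinct propositional variables and let D, E, F be clauses none of which contains any of the literals (p, true), (p, false), (q, true), (q, false). Set C1 = {(p, true), (q, true)} ∪ D, C2 = {(p, false), (q, true)} ∪ E and C3 = {(q, false)} ∪ F. Then Res_q(Res_p(C1, C2), C3) = D ∪ E ∪ F and Res_p(Res_q(C1, C3), Res_q(C2, C3)) = D ∪ E ∪ F; hence rule S1, which replaces the first two-step derivation of the context root by the second, leaves the context root unchanged. -/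
abbrev Clause (V : Type) := Finset (V × Bool)

def Res {V : Type} [DecidableEq V] (p : V) (C D : Clause V) : Clause V :=
  (C \ {(p, true)}) ∪ (D \ {(p, false)})

/-- Soundness of rule S1 (root preservation). -/
theorem rule_S1_sound {V : Type} [DecidableEq V] (p q : V) (hpq : p ≠ q)
    (D E F : Clause V)
    (hD : ∀ b : Bool, (p, b) ∉ D ∧ (q, b) ∉ D)
    (hE : ∀ b : Bool, (p, b) ∉ E ∧ (q, b) ∉ E)
    (hF : ∀ b : Bool, (p, b) ∉ F ∧ (q, b) ∉ F) :
    Res q (Res p (({(p, true), (q, true)} : Clause V) ∪ D)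
                 (({(p, false), (q, true)} : Clause V) ∪ E))
          (({(q, false)} : Clause V) ∪ F) = D ∪ E ∪ F ∧
    Res p (Res q (({(p, true), (q, true)} : Clause V) ∪ D)
                 (({(q, false)} : Clause V) ∪ F))
          (Res q (({(p, false), (q, true)} : Clause V) ∪ E)
                 (({(q, false)} : Clause V) ∪ F)) = D ∪ E ∪ F := by
  constructor <;>
  · ext ⟨v, b⟩
    have hD1 := (hD true).1; have hD2 := (hD false).1
    have hD3 := (hD true).2; have hD4 := (hD false).2
    have hE1 := (hE true).1; have hE2 := (hE false).1
    have hE3 := (hE true).2; have hE4 := (hE false).2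
    have hF1 := (hF true).1; have hF2 := (hF false).1
    have hF3 := (hF true).2; have hF4 := (hF false).2
    simp only [Res, Finset.mem_union, Finset.mem_sdiff, Finset.mem_insert,
      Finset.mem_singleton, Prod.mk.injEq]
    by_cases hv : v = p <;> by_cases hw : v = q <;> cases b <;>
      subst_vars <;> simp_all <;> tauto
end

section
/- Soundness of rule S2 (root preservation): Let p and q be distinct propositional variables and let D, E, F be clauses none of which contains any of the literals (p, true), (p, false), (q, true), (q, false). Set C1 = {(p, true), (q, true)} ∪ D, C2 = {(p, false)} ∪ E and C3 = {(q, false)} ∪ F. Then Res_q(Res_p(C1, C2), C3) = D ∪ E ∪ F and Res_p(Res_q(C1, C3), C2) = D ∪ E ∪ F; hence rule S2, which swaps the two resolution steps of the context, leaves the context root unchanged. -/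
/-- Soundness of rule S2 (root preservation). -/
theorem rule_S2_sound {V : Type} [DecidableEq V] (p q : V) (hpq : p ≠ q)
    (D E F : Clause V)
    (hD : ∀ b : Bool, (p, b) ∉ D ∧ (q, b) ∉ D)
    (hE : ∀ b : Bool, (p, b) ∉ E ∧ (q, b) ∉ E)
    (hF : ∀ b : Bool, (p, b) ∉ F ∧ (q, b) ∉ F) :
    Res q (Res p (({(p, true), (q, true)} : Clause V) ∪ D)
                 (({(p, false)} : Clause V) ∪ E))
          (({(q, false)} : Clause V) ∪ F) = D ∪ E ∪ F ∧
    Res p (Res q (({(p, true), (q, true)} : Clause V) ∪ D)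
                 (({(q, false)} : Clause V) ∪ F))
          (({(p, false)} : Clause V) ∪ E) = D ∪ E ∪ F := by
  constructor <;>
  · ext ⟨v, b⟩
    simp only [Res, Finset.mem_union, Finset.mem_sdiff, Finset.mem_insert,
      Finset.mem_singleton, Prod.mk.injEq, Prod.ext_iff]
    constructor
    · rintro ((((h|h)|h) | h) | h) <;>
        first
        | (obtain ⟨⟨h1,h2⟩,_⟩ := h; exact absurd (h1.trans h2.symm) hpq)
        | (obtain ⟨⟨h1,h2⟩,_⟩ := h; exact absurd (h2.trans h1.symm) hpq)
        | tauto
    · rintro ((h|h)|h) <;>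
      [ (have np : ¬ (v = p ∧ True) := fun ⟨hv, _⟩ => by
            subst hv; rcases b with _|_
            exacts [(hD false).1 h, (hD true).1 h]
         have nq : ¬ (v = q ∧ True) := fun ⟨hv, _⟩ => by
            subst hv; rcases b with _|_
            exacts [(hD false).2 h, (hD true).2 h]);
        (have np : ¬ (v = p ∧ True) := fun ⟨hv, _⟩ => by
            subst hv; rcases b with _|_
            exacts [(hE false).1 h, (hE true).1 h]
         have nq : ¬ (v = q ∧ True) := fun ⟨hv, _⟩ => by
            subst hv; rcases b with _|_
            exacts [(hE false).2 h, (hE true).2 h]);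
        (have np : ¬ (v = p ∧ True) := fun ⟨hv, _⟩ => by
            subst hv; rcases b with _|_
            exacts [(hF false).1 h, (hF true).1 h]
         have nq : ¬ (v = q ∧ True) := fun ⟨hv, _⟩ => by
            subst hv; rcases b with _|_
            exacts [(hF false).2 h, (hF true).2 h]) ] <;>
      · have np' : ∀ c : Bool, ¬ (v = p ∧ b = c) := fun c hc => np ⟨hc.1, trivial⟩
        have nq' : ∀ c : Bool, ¬ (v = q ∧ b = c) := fun c hc => nq ⟨hc.1, trivial⟩
        have h1 := np' true; have h2 := np' false
        have h3 := nq' true; have h4 := nq' false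
        first
        | exact Or.inl ⟨Or.inl ⟨Or.inr h, h1⟩, h3⟩
        | exact Or.inl ⟨Or.inr ⟨Or.inr h, h2⟩, h3⟩
        | exact Or.inr ⟨Or.inr h, h4⟩
        | exact Or.inl ⟨Or.inl ⟨Or.inr h, h3⟩, h1⟩
        | exact Or.inr ⟨Or.inr h, h2⟩
        | exact Or.inl ⟨Or.inr ⟨Or.inr h, h4⟩, h1⟩
end

section
/- Soundness of rule R1 (root strengthening): Let p and q be distinct propositional variables and let D, E, F be clauses none of which contains any of the literals (p, true), (p, false), (q, true), (q, false). Set C1 = {(p, true), (q, true)} ∪ D, C2 = {(p, false), (q, true)} ∪ E and C3 = {(p, true), (q, false)} ∪ F. Then Res_q(Res_p(C1, C2), C3) = {(p, true)} ∪ D ∪ E ∪ F, Res_q(C1, C3) = {(p, true)} ∪ D ∪ F, and therefore Res_q(C1, C3) ⊆ Res_q(Res_p(C1, C2), C3): the single resolution step of C1 and C3 produced by rule R1 subsumes the original context root. -/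
/-- Soundness of rule R1 (root strengthening). -/
theorem rule_R1_sound {V : Type} [DecidableEq V] (p q : V) (hpq : p ≠ q)
    (D E F : Clause V)
    (hD : ∀ b : Bool, (p, b) ∉ D ∧ (q, b) ∉ D)
    (hE : ∀ b : Bool, (p, b) ∉ E ∧ (q, b) ∉ E)
    (hF : ∀ b : Bool, (p, b) ∉ F ∧ (q, b) ∉ F) :
    Res q (Res p (({(p, true), (q, true)} : Clause V) ∪ D)
                 (({(p, false), (q, true)} : Clause V) ∪ E))
          (({(p, true), (q, false)} : Clause V) ∪ F)
      = ({(p, true)} : Clause V) ∪ D ∪ E ∪ F ∧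
    Res q (({(p, true), (q, true)} : Clause V) ∪ D)
          (({(p, true), (q, false)} : Clause V) ∪ F)
      = ({(p, true)} : Clause V) ∪ D ∪ F ∧
    Res q (({(p, true), (q, true)} : Clause V) ∪ D)
          (({(p, true), (q, false)} : Clause V) ∪ F)
      ⊆ Res q (Res p (({(p, true), (q, true)} : Clause V) ∪ D)
                     (({(p, false), (q, true)} : Clause V) ∪ E))
              (({(p, true), (q, false)} : Clause V) ∪ F) := by
  obtain ⟨hD1, hD2⟩ := hD true
  obtain ⟨hD3, hD4⟩ := hD false
  obtain ⟨hE1, hE2⟩ := hE true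
  obtain ⟨hE3, hE4⟩ := hE false
  obtain ⟨hF1, hF2⟩ := hF true
  obtain ⟨hF3, hF4⟩ := hF false
  have h1 : Res q (Res p (({(p, true), (q, true)} : Clause V) ∪ D)
                 (({(p, false), (q, true)} : Clause V) ∪ E))
          (({(p, true), (q, false)} : Clause V) ∪ F)
      = ({(p, true)} : Clause V) ∪ D ∪ E ∪ F := by
    ext ⟨v, b⟩
    simp only [Res, Finset.mem_union, Finset.mem_sdiff, Finset.mem_insert,
      Finset.mem_singleton, Prod.mk.injEq]
    rcases eq_or_ne v p with rfl | hvp <;> rcases eq_or_ne v q with rfl | hvq <;>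
      cases b <;> simp_all
  have h2 : Res q (({(p, true), (q, true)} : Clause V) ∪ D)
          (({(p, true), (q, false)} : Clause V) ∪ F)
      = ({(p, true)} : Clause V) ∪ D ∪ F := by
    ext ⟨v, b⟩
    simp only [Res, Finset.mem_union, Finset.mem_sdiff, Finset.mem_insert,
      Finset.mem_singleton, Prod.mk.injEq]
    rcases eq_or_ne v p with rfl | hvp <;> rcases eq_or_ne v q with rfl | hvq <;>
      cases b <;> simp_all
  refine ⟨h1, h2, ?_⟩
  rw [h1, h2]
  intro x hx
  simp only [Finset.mem_union] at hx ⊢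
  tauto
end

section
/- Soundness of rule R2 (root strengthening): Let p and q be distinct propositional variables and let D, E, F be clauses none of which contains any of the literals (p, true), (p, false), (q, true), (q, false). Set C1 = {(p, true), (q, true)} ∪ D, C2 = {(p, false)} ∪ E and C3 = {(p, true), (q, false)} ∪ F. Then Res_q(Res_p(C1, C2), C3) = {(p, true)} ∪ D ∪ E ∪ F, while Res_p(Res_q(C1, C3), C2) = D ∪ E ∪ F; hence the root produced by rule R2 is a strict subset of (in particular subsumes) the original context root. -/
/-- Soundness of rule R2 (root strengthening). -/
theorem rule_R2_sound {V : Type} [DecidableEq V] (p q : V) (hpq : p ≠ q)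
    (D E F : Clause V)
    (hD : ∀ b : Bool, (p, b) ∉ D ∧ (q, b) ∉ D)
    (hE : ∀ b : Bool, (p, b) ∉ E ∧ (q, b) ∉ E)
    (hF : ∀ b : Bool, (p, b) ∉ F ∧ (q, b) ∉ F) :
    Res q (Res p (({(p, true), (q, true)} : Clause V) ∪ D)
                 (({(p, false)} : Clause V) ∪ E))
          (({(p, true), (q, false)} : Clause V) ∪ F)
      = ({(p, true)} : Clause V) ∪ D ∪ E ∪ F ∧
    Res p (Res q (({(p, true), (q, true)} : Clause V) ∪ D)
                 (({(p, true), (q, false)} : Clause V) ∪ F))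
          (({(p, false)} : Clause V) ∪ E) = D ∪ E ∪ F ∧
    Res p (Res q (({(p, true), (q, true)} : Clause V) ∪ D)
                 (({(p, true), (q, false)} : Clause V) ∪ F))
          (({(p, false)} : Clause V) ∪ E)
      ⊂ Res q (Res p (({(p, true), (q, true)} : Clause V) ∪ D)
                     (({(p, false)} : Clause V) ∪ E))
              (({(p, true), (q, false)} : Clause V) ∪ F) := by
  have h1 : Res q (Res p (({(p, true), (q, true)} : Clause V) ∪ D)
                 (({(p, false)} : Clause V) ∪ E))
          (({(p, true), (q, false)} : Clause V) ∪ F)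
      = ({(p, true)} : Clause V) ∪ D ∪ E ∪ F := by
    ext ⟨v, b⟩
    simp only [Res, Finset.mem_union, Finset.mem_sdiff, Finset.mem_singleton,
      Finset.mem_insert, Prod.mk.injEq]
    have hd := fun b' => hD b'; have he := fun b' => hE b'; have hf := fun b' => hF b'
    by_cases hvp : v = p <;> by_cases hvq : v = q <;> cases b <;> simp_all <;> tauto
  have h2 : Res p (Res q (({(p, true), (q, true)} : Clause V) ∪ D)
                 (({(p, true), (q, false)} : Clause V) ∪ F))
          (({(p, false)} : Clause V) ∪ E) = D ∪ E ∪ F := by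
    ext ⟨v, b⟩
    simp only [Res, Finset.mem_union, Finset.mem_sdiff, Finset.mem_singleton,
      Finset.mem_insert, Prod.mk.injEq]
    have hd := fun b' => hD b'; have he := fun b' => hE b'; have hf := fun b' => hF b'
    by_cases hvp : v = p <;> by_cases hvq : v = q <;> cases b <;> simp_all <;> tauto
  refine ⟨h1, h2, ?_⟩
  rw [h1, h2]
  constructor
  · intro x hx
    simp only [Finset.mem_union] at hx ⊢
    tauto
  · intro hsub
    have := hsub (Finset.mem_union_left _ (Finset.mem_union_left _
      (Finset.mem_union_left _ (Finset.mem_singleton_self (p, true)))))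
    simp only [Finset.mem_union] at this
    rcases this with (h | h) | h
    · exact (hD true).1 h
    · exact (hE true).1 h
    · exact (hF true).1 h
end

section
/- Soundness of rule R2' (root strengthening): Let p and q be distinct propositional variables and let D, E, F be clauses none of which contains any of the literals (p, true), (p, false), (q, true), (q, false). Set C1 = {(p, true), (q, true)} ∪ D, C2 = {(p, false)} ∪ E and C3 = {(p, true), (q, false)} ∪ F. Then Res_q(C1, C3) = {(p, true)} ∪ D ∪ F and Res_q(Res_p(C1, C2), C3) = {(p, true)} ∪ D ∪ E ∪ F, so Res_q(C1, C3) ⊆ Res_q(Res_p(C1, C2), C3): the single resolution step produced by rule R2' subsumes the original context root. -/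
/-- Soundness of rule R2' (root strengthening). -/
theorem rule_R2'_sound {V : Type} [DecidableEq V] (p q : V) (hpq : p ≠ q)
    (D E F : Clause V)
    (hD : ∀ b : Bool, (p, b) ∉ D ∧ (q, b) ∉ D)
    (hE : ∀ b : Bool, (p, b) ∉ E ∧ (q, b) ∉ E)
    (hF : ∀ b : Bool, (p, b) ∉ F ∧ (q, b) ∉ F) :
    Res q (({(p, true), (q, true)} : Clause V) ∪ D)
          (({(p, true), (q, false)} : Clause V) ∪ F)
      = ({(p, true)} : Clause V) ∪ D ∪ F ∧
    Res q (Res p (({(p, true), (q, true)} : Clause V) ∪ D)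
                 (({(p, false)} : Clause V) ∪ E))
          (({(p, true), (q, false)} : Clause V) ∪ F)
      = ({(p, true)} : Clause V) ∪ D ∪ E ∪ F ∧
    Res q (({(p, true), (q, true)} : Clause V) ∪ D)
          (({(p, true), (q, false)} : Clause V) ∪ F)
      ⊆ Res q (Res p (({(p, true), (q, true)} : Clause V) ∪ D)
                     (({(p, false)} : Clause V) ∪ E))
              (({(p, true), (q, false)} : Clause V) ∪ F) := by
  obtain ⟨hDp₁, hDq₁⟩ := hD true
  obtain ⟨hDp₀, hDq₀⟩ := hD false
  obtain ⟨hEp₁, hEq₁⟩ := hE true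
  obtain ⟨hEp₀, hEq₀⟩ := hE false
  obtain ⟨hFp₁, hFq₁⟩ := hF true
  obtain ⟨hFp₀, hFq₀⟩ := hF false
  have h1 : Res q (({(p, true), (q, true)} : Clause V) ∪ D)
          (({(p, true), (q, false)} : Clause V) ∪ F)
      = ({(p, true)} : Clause V) ∪ D ∪ F := by
    ext ⟨v, b⟩
    simp only [Res, Finset.mem_union, Finset.mem_sdiff, Finset.mem_insert,
      Finset.mem_singleton, Prod.mk.injEq]
    by_cases hvp : v = p <;> by_cases hvq : v = q <;> subst_vars <;>
      cases b <;> simp_all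
  have h2 : Res q (Res p (({(p, true), (q, true)} : Clause V) ∪ D)
                 (({(p, false)} : Clause V) ∪ E))
          (({(p, true), (q, false)} : Clause V) ∪ F)
      = ({(p, true)} : Clause V) ∪ D ∪ E ∪ F := by
    ext ⟨v, b⟩
    simp only [Res, Finset.mem_union, Finset.mem_sdiff, Finset.mem_insert,
      Finset.mem_singleton, Prod.mk.injEq]
    by_cases hvp : v = p <;> by_cases hvq : v = q <;> subst_vars <;>
      cases b <;> simp_all
  refine ⟨h1, h2, ?_⟩
  rw [h1, h2]
  intro x hx
  rcases Finset.mem_union.mp hx with h | h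
  · rcases Finset.mem_union.mp h with h | h
    · exact Finset.mem_union_left _ (Finset.mem_union_left _ (Finset.mem_union_left _ h))
    · exact Finset.mem_union_left _ (Finset.mem_union_left _ (Finset.mem_union_right _ h))
  · exact Finset.mem_union_right _ h
end

section
/- Soundness of rule R3 (root strengthening): Let p and q be distinct propositional variables and let D, E, F be clauses none of which contains any of the literals (p, true), (p, false), (q, true), (q, false). Set C1 = {(p, true), (q, true)} ∪ D, C2 = {(p, false)} ∪ E and C3 = {(p, false), (q, false)} ∪ F. Then Res_q(Res_p(C1, C2), C3) = {(p, false)} ∪ D ∪ E ∪ F, and C2 ⊆ Res_q(Res_p(C1, C2), C3): the antecedent C2, which replaces the whole context under rule R3, subsumes the original context root. -/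
/-- Soundness of rule R3 (root strengthening). -/
theorem rule_R3_sound {V : Type} [DecidableEq V] (p q : V) (hpq : p ≠ q)
    (D E F : Clause V)
    (hD : ∀ b : Bool, (p, b) ∉ D ∧ (q, b) ∉ D)
    (hE : ∀ b : Bool, (p, b) ∉ E ∧ (q, b) ∉ E)
    (hF : ∀ b : Bool, (p, b) ∉ F ∧ (q, b) ∉ F) :
    Res q (Res p (({(p, true), (q, true)} : Clause V) ∪ D)
                 (({(p, false)} : Clause V) ∪ E))
          (({(p, false), (q, false)} : Clause V) ∪ F)
      = ({(p, false)} : Clause V) ∪ D ∪ E ∪ F ∧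
    (({(p, false)} : Clause V) ∪ E)
      ⊆ Res q (Res p (({(p, true), (q, true)} : Clause V) ∪ D)
                     (({(p, false)} : Clause V) ∪ E))
              (({(p, false), (q, false)} : Clause V) ∪ F) := by
  have heq : Res q (Res p (({(p, true), (q, true)} : Clause V) ∪ D)
                 (({(p, false)} : Clause V) ∪ E))
          (({(p, false), (q, false)} : Clause V) ∪ F)
      = ({(p, false)} : Clause V) ∪ D ∪ E ∪ F := by
    ext ⟨v, b⟩
    simp only [Res, Finset.mem_union, Finset.mem_sdiff, Finset.mem_insert,
      Finset.mem_singleton, Prod.mk.injEq]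
    obtain ⟨hD1, hD2⟩ := hD b
    obtain ⟨hE1, hE2⟩ := hE b
    obtain ⟨hF1, hF2⟩ := hF b
    by_cases hvp : v = p <;> by_cases hvq : v = q <;>
      subst_vars <;> simp_all
  refine ⟨heq, ?_⟩
  rw [heq]
  intro x hx
  simp only [Finset.mem_union] at hx ⊢
  tauto
end

section
/- Global form of the SubsumptionPropagation correctness theorem (Theorem 1): let ℂ and ℂ' be sets of clauses such that every clause of ℂ is subsumed by some clause of ℂ' (for every D ∈ ℂ there is D' ∈ ℂ' with D' ⊆ D). If a clause C is derivable by resolution from ℂ, then there exists a clause C' with C' ⊆ C that is derivable by resolution from ℂ'. In particular, strengthening some clauses of a legal resolution proof can be propagated to obtain a legal proof whose new root subsumes the previous one. -/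
/-- A clause is derivable by resolution from a set of clauses. -/
inductive Derivable {V : Type} [DecidableEq V] (𝒞 : Set (Clause V)) : Clause V → Prop
  | ax {C : Clause V} : C ∈ 𝒞 → Derivable 𝒞 C
  | res {p : V} {Cp Cm : Clause V} :
      Derivable 𝒞 Cp → Derivable 𝒞 Cm →
      (p, true) ∈ Cp → (p, false) ∈ Cm → Derivable 𝒞 (Res p Cp Cm)

/-- Global form of the SubsumptionPropagation correctness theorem (Theorem 1):
if every clause of `𝒞` is subsumed by some clause of `𝒞'`, then every clause
derivable from `𝒞` is subsumed by some clause derivable from `𝒞'`. -/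
theorem subsumption_propagation {V : Type} [DecidableEq V]
    (𝒞 𝒞' : Set (Clause V))
    (hsub : ∀ D ∈ 𝒞, ∃ D' ∈ 𝒞', D' ⊆ D)
    (C : Clause V) (hC : Derivable 𝒞 C) :
    ∃ C' : Clause V, C' ⊆ C ∧ Derivable 𝒞' C' := by
  induction hC with
  | ax h =>
    obtain ⟨D', hD', hsub'⟩ := hsub _ h
    exact ⟨D', hsub', Derivable.ax hD'⟩
  | @res p Cp Cm _ _ hp hm ihp ihm =>
    obtain ⟨Cp', hps, hpd⟩ := ihp
    obtain ⟨Cm', hms, hmd⟩ := ihm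
    by_cases h1 : (p, true) ∈ Cp'
    · by_cases h2 : (p, false) ∈ Cm'
      · refine ⟨Res p Cp' Cm', ?_, Derivable.res hpd hmd h1 h2⟩
        intro x hx
        simp only [Res, Finset.mem_union, Finset.mem_sdiff, Finset.mem_singleton] at hx ⊢
        rcases hx with ⟨h, hne⟩ | ⟨h, hne⟩
        · exact Or.inl ⟨hps h, hne⟩
        · exact Or.inr ⟨hms h, hne⟩
      · refine ⟨Cm', ?_, hmd⟩
        intro x hx
        simp only [Res, Finset.mem_union, Finset.mem_sdiff, Finset.mem_singleton]
        exact Or.inr ⟨hms hx, fun h => h2 (h ▸ hx)⟩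
    · refine ⟨Cp', ?_, hpd⟩
      intro x hx
      simp only [Res, Finset.mem_union, Finset.mem_sdiff, Finset.mem_singleton]
      exact Or.inl ⟨hps hx, fun h => h1 (h ▸ hx)⟩
end

section
/- Correctness of the inner step of McMillan's interpolation algorithm for an A-local pivot: let p be an A-local variable (p ∈ Var(A) and p ∉ Var(B)), and let C⁺, C⁻ be clauses with (p, true) ∈ C⁺ and (p, false) ∈ C⁻. If the predicate I1 together with C⁺, and the predicate I2 together with C⁻, each satisfy the McMillan invariant (i)–(iii), then the predicate I1 ∨ I2 together with Res_p(C⁺, C⁻) satisfies the McMillan invariant (i)–(iii). -/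
/-- A valuation satisfies a clause iff it satisfies some literal of it. -/
def SatClause {V : Type} (ν : V → Bool) (C : Clause V) : Prop :=
  ∃ l ∈ C, ν l.1 = l.2

/-- A valuation satisfies a (finite) set of clauses. -/
def SatSet {V : Type} (ν : V → Bool) (A : Finset (Clause V)) : Prop :=
  ∀ C ∈ A, SatClause ν C

/-- The set of variables occurring in literals of clauses of `A`. -/
def varsOf {V : Type} [DecidableEq V] (A : Finset (Clause V)) : Finset V :=
  A.biUnion fun C => C.image Prod.fst

/-- A variable is A-local if it occurs in `A` but not in `B`. -/
def ALocal {V : Type} [DecidableEq V] (A B : Finset (Clause V)) (v : V) : Prop :=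
  v ∈ varsOf A ∧ v ∉ varsOf B

/-- A variable is shared if it occurs both in `A` and in `B`. -/
def Shared {V : Type} [DecidableEq V] (A B : Finset (Clause V)) (v : V) : Prop :=
  v ∈ varsOf A ∧ v ∈ varsOf B

instance {V : Type} [DecidableEq V] (A B : Finset (Clause V)) :
    DecidablePred (ALocal A B) := fun _ => instDecidableAnd

instance {V : Type} [DecidableEq V] (A B : Finset (Clause V)) :
    DecidablePred (Shared A B) := fun _ => instDecidableAnd

/-- A predicate on valuations depends only on shared variables. -/
def DependsOnlyShared {V : Type} [DecidableEq V] (A B : Finset (Clause V))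
    (I : (V → Bool) → Prop) : Prop :=
  ∀ ν ν' : V → Bool, (∀ v, Shared A B v → ν v = ν' v) → (I ν ↔ I ν')

/-- The McMillan invariant for a clause `C` and a predicate `I` on valuations. -/
def McMillanInv {V : Type} [DecidableEq V] (A B : Finset (Clause V))
    (C : Clause V) (I : (V → Bool) → Prop) : Prop :=
  (∀ ν, SatSet ν A → I ν ∨ SatClause ν (C.filter fun l => ALocal A B l.1)) ∧
  (∀ ν, SatSet ν B → I ν → SatClause ν (C.filter fun l => ¬ ALocal A B l.1)) ∧
  DependsOnlyShared A B I

/-- Correctness of the inner step of McMillan's interpolation algorithm for an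
A-local pivot. -/
theorem mcmillan_inner_step_Alocal {V : Type} [DecidableEq V]
    (A B : Finset (Clause V)) (p : V)
    (hpA : p ∈ varsOf A) (hpB : p ∉ varsOf B)
    (Cp Cm : Clause V) (hp : (p, true) ∈ Cp) (hm : (p, false) ∈ Cm)
    (I1 I2 : (V → Bool) → Prop)
    (h1 : McMillanInv A B Cp I1) (h2 : McMillanInv A B Cm I2) :
    McMillanInv A B (Res p Cp Cm) (fun ν => I1 ν ∨ I2 ν) := by
  obtain ⟨h1a, h1b, h1s⟩ := h1
  obtain ⟨h2a, h2b, h2s⟩ := h2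
  refine ⟨?_, ?_, ?_⟩
  · intro ν hν
    rcases h1a ν hν with hI1 | ⟨l1, hl1, hs1⟩
    · exact Or.inl (Or.inl hI1)
    rcases h2a ν hν with hI2 | ⟨l2, hl2, hs2⟩
    · exact Or.inl (Or.inr hI2)
    right
    simp only [Finset.mem_filter] at hl1 hl2
    cases hb : ν p with
    | false =>
      refine ⟨l1, ?_, hs1⟩
      refine Finset.mem_filter.mpr ⟨Finset.mem_union_left _ ?_, hl1.2⟩
      refine Finset.mem_sdiff.mpr ⟨hl1.1, ?_⟩
      simp only [Finset.mem_singleton]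
      rintro rfl
      simp [hb] at hs1
    | true =>
      refine ⟨l2, ?_, hs2⟩
      refine Finset.mem_filter.mpr ⟨Finset.mem_union_right _ ?_, hl2.2⟩
      refine Finset.mem_sdiff.mpr ⟨hl2.1, ?_⟩
      simp only [Finset.mem_singleton]
      rintro rfl
      simp [hb] at hs2
  · intro ν hν hI
    rcases hI with hI1 | hI2
    · obtain ⟨l, hl, hs⟩ := h1b ν hν hI1
      simp only [Finset.mem_filter] at hl
      refine ⟨l, Finset.mem_filter.mpr ⟨Finset.mem_union_left _ (Finset.mem_sdiff.mpr ⟨hl.1, ?_⟩), hl.2⟩, hs⟩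
      simp only [Finset.mem_singleton]
      rintro rfl
      exact hl.2 ⟨hpA, hpB⟩
    · obtain ⟨l, hl, hs⟩ := h2b ν hν hI2
      simp only [Finset.mem_filter] at hl
      refine ⟨l, Finset.mem_filter.mpr ⟨Finset.mem_union_right _ (Finset.mem_sdiff.mpr ⟨hl.1, ?_⟩), hl.2⟩, hs⟩
      simp only [Finset.mem_singleton]
      rintro rfl
      exact hl.2 ⟨hpA, hpB⟩
  · intro ν ν' hagree
    exact or_congr (h1s ν ν' hagree) (h2s ν ν' hagree)
end

section
/- Correctness of the inner step of McMillan's interpolation algorithm for a non-A-local pivot: let p be a variable that is not A-local (p ∈ Var(B)), and let C⁺, C⁻ be clauses with (p, true) ∈ C⁺ and (p, false) ∈ C⁻. If the predicate I1 together with C⁺, and the predicate I2 together with C⁻, each satisfy the McMillan invariant (i)–(iii), then the predicate I1 ∧ I2 together with Res_p(C⁺, C⁻) satisfies the McMillan invariant (i)–(iii). -/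
/-- Correctness of the inner step of McMillan's interpolation algorithm for a
pivot that is not A-local. -/
theorem mcmillan_inner_step_nonAlocal {V : Type} [DecidableEq V]
    (A B : Finset (Clause V)) (p : V)
    (hpB : p ∈ varsOf B)
    (Cp Cm : Clause V) (hp : (p, true) ∈ Cp) (hm : (p, false) ∈ Cm)
    (I1 I2 : (V → Bool) → Prop)
    (h1 : McMillanInv A B Cp I1) (h2 : McMillanInv A B Cm I2) :
    McMillanInv A B (Res p Cp Cm) (fun ν => I1 ν ∧ I2 ν) := by

  obtain ⟨h1a, h1b, h1c⟩ := h1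
  obtain ⟨h2a, h2b, h2c⟩ := h2
  have hpnl : ¬ ALocal A B p := fun h => h.2 hpB
  refine ⟨?_, ?_, ?_⟩
  · intro ν hν
    rcases h1a ν hν with hI1 | ⟨l, hl, hsat⟩
    · rcases h2a ν hν with hI2 | ⟨l, hl, hsat⟩
      · exact Or.inl ⟨hI1, hI2⟩
      · refine Or.inr ⟨l, ?_, hsat⟩
        simp only [Finset.mem_filter] at hl ⊢
        refine ⟨?_, hl.2⟩
        have hne : l ≠ (p, false) := by
          rintro rfl; exact hpnl hl.2
        simp [Res, Finset.mem_union, Finset.mem_sdiff, hl.1, hne]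
    · refine Or.inr ⟨l, ?_, hsat⟩
      simp only [Finset.mem_filter] at hl ⊢
      refine ⟨?_, hl.2⟩
      have hne : l ≠ (p, true) := by
        rintro rfl; exact hpnl hl.2
      simp [Res, Finset.mem_union, Finset.mem_sdiff, hl.1, hne]
  · intro ν hν ⟨hI1, hI2⟩
    obtain ⟨l1, hl1, hs1⟩ := h1b ν hν hI1
    obtain ⟨l2, hl2, hs2⟩ := h2b ν hν hI2
    simp only [Finset.mem_filter] at hl1 hl2
    by_cases e1 : l1 = (p, true)
    · by_cases e2 : l2 = (p, false)
      · exfalso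
        subst e1; subst e2
        simp at hs1 hs2
        rw [hs1] at hs2; exact Bool.noConfusion hs2
      · refine ⟨l2, ?_, hs2⟩
        simp only [Finset.mem_filter]
        exact ⟨by simp [Res, Finset.mem_union, Finset.mem_sdiff, hl2.1, e2], hl2.2⟩
    · refine ⟨l1, ?_, hs1⟩
      simp only [Finset.mem_filter]
      exact ⟨by simp [Res, Finset.mem_union, Finset.mem_sdiff, hl1.1, e1], hl1.2⟩
  · intro ν ν' h
    exact and_congr (h1c ν ν' h) (h2c ν ν' h)
end

section
/- Invariant theorem for McMillan's interpolation algorithm: for every resolution derivation tree T over (A, B) deriving a clause C, the McMillan partial interpolant itp(T), together with C, satisfies the McMillan invariant: (i) every valuation satisfying A satisfies itp(T) or satisfies C|loc; (ii) every valuation satisfying B and satisfying itp(T) satisfies C|b; (iii) itp(T) depends only on shared variables. -/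
/-- A resolution derivation tree over `(A, B)` deriving a clause. Leaves carry
a tag recording whether the clause comes from `A` or from `B`. -/
inductive RTree {V : Type} [DecidableEq V] (A B : Finset (Clause V)) :
    Clause V → Type
  | leafA {C : Clause V} : C ∈ A → RTree A B C
  | leafB {C : Clause V} : C ∈ B → RTree A B C
  | node {Cp Cm : Clause V} (p : V) :
      (p, true) ∈ Cp → (p, false) ∈ Cm →
      RTree A B Cp → RTree A B Cm → RTree A B (Res p Cp Cm)

/-- The McMillan partial interpolant of a derivation tree. -/
def itp {V : Type} [DecidableEq V] {A B : Finset (Clause V)} :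
    {C : Clause V} → RTree A B C → (V → Bool) → Prop
  | C, .leafA _, ν => SatClause ν (C.filter fun l => Shared A B l.1)
  | _, .leafB _, _ => True
  | _, .node p _ _ T1 T2, ν =>
      if ALocal A B p then itp T1 ν ∨ itp T2 ν else itp T1 ν ∧ itp T2 ν


lemma mem_Res {V : Type} [DecidableEq V] {p : V} {C D : Clause V} {l : V × Bool} :
    l ∈ Res p C D ↔ (l ∈ C ∧ l ≠ (p, true)) ∨ (l ∈ D ∧ l ≠ (p, false)) := by
  simp [Res]

lemma var_mem_vars {V : Type} [DecidableEq V] {A : Finset (Clause V)} {C : Clause V}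
    {l : V × Bool} (hC : C ∈ A) (hl : l ∈ C) : l.1 ∈ varsOf A :=
  Finset.mem_biUnion.mpr ⟨C, hC, Finset.mem_image_of_mem _ hl⟩

/-- Invariant theorem for McMillan's interpolation algorithm. -/
theorem mcmillan_invariant {V : Type} [DecidableEq V]
    (A B : Finset (Clause V)) (C : Clause V) (T : RTree A B C) :
    (∀ ν, SatSet ν A → itp T ν ∨ SatClause ν (C.filter fun l => ALocal A B l.1)) ∧
    (∀ ν, SatSet ν B → itp T ν → SatClause ν (C.filter fun l => ¬ ALocal A B l.1)) ∧
    DependsOnlyShared A B (itp T) := by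
  induction T with
  | @leafA C hC =>
    simp only [itp]
    refine ⟨?_, ?_, ?_⟩
    · intro ν hν
      obtain ⟨l, hl, hvl⟩ := hν C hC
      by_cases hB : l.1 ∈ varsOf B
      · exact Or.inl ⟨l, Finset.mem_filter.mpr ⟨hl, var_mem_vars hC hl, hB⟩, hvl⟩
      · exact Or.inr ⟨l, Finset.mem_filter.mpr ⟨hl, var_mem_vars hC hl, hB⟩, hvl⟩
    · rintro ν _ ⟨l, hl, hvl⟩
      rw [Finset.mem_filter] at hl
      exact ⟨l, Finset.mem_filter.mpr ⟨hl.1, fun hA => hA.2 hl.2.2⟩, hvl⟩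
    · intro ν ν' h
      constructor <;> (rintro ⟨l, hl, hvl⟩; refine ⟨l, hl, ?_⟩)
      · rw [← h l.1 (Finset.mem_filter.mp hl).2]; exact hvl
      · rw [h l.1 (Finset.mem_filter.mp hl).2]; exact hvl
  | @leafB C hC =>
    simp only [itp]
    refine ⟨fun ν _ => Or.inl trivial, ?_, fun ν ν' _ => Iff.rfl⟩
    intro ν hν _
    obtain ⟨l, hl, hvl⟩ := hν C hC
    exact ⟨l, Finset.mem_filter.mpr ⟨hl, fun hA => hA.2 (var_mem_vars hC hl)⟩, hvl⟩
  | @node Cp Cm p hp hm T1 T2 ih1 ih2 =>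
    obtain ⟨ih1a, ih1b, ih1s⟩ := ih1
    obtain ⟨ih2a, ih2b, ih2s⟩ := ih2
    simp only [itp]
    by_cases hploc : ALocal A B p
    · simp only [if_pos hploc]
      refine ⟨?_, ?_, fun ν ν' h => or_congr (ih1s ν ν' h) (ih2s ν ν' h)⟩
      · intro ν hν
        rcases ih1a ν hν with h1 | ⟨l1, hl1, hv1⟩
        · exact Or.inl (Or.inl h1)
        rcases ih2a ν hν with h2 | ⟨l2, hl2, hv2⟩
        · exact Or.inl (Or.inr h2)
        rw [Finset.mem_filter] at hl1 hl2
        cases hvp : ν p with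
        | false =>
          refine Or.inr ⟨l1, Finset.mem_filter.mpr ⟨mem_Res.mpr (Or.inl ⟨hl1.1, ?_⟩), hl1.2⟩, hv1⟩
          rintro rfl; rw [hv1] at hvp; simp at hvp
        | true =>
          refine Or.inr ⟨l2, Finset.mem_filter.mpr ⟨mem_Res.mpr (Or.inr ⟨hl2.1, ?_⟩), hl2.2⟩, hv2⟩
          rintro rfl; rw [hv2] at hvp; simp at hvp
      · rintro ν hν (h1 | h2)
        · obtain ⟨l, hl, hv⟩ := ih1b ν hν h1
          rw [Finset.mem_filter] at hl
          refine ⟨l, Finset.mem_filter.mpr ⟨mem_Res.mpr (Or.inl ⟨hl.1, ?_⟩), hl.2⟩, hv⟩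
          rintro rfl; exact hl.2 hploc
        · obtain ⟨l, hl, hv⟩ := ih2b ν hν h2
          rw [Finset.mem_filter] at hl
          refine ⟨l, Finset.mem_filter.mpr ⟨mem_Res.mpr (Or.inr ⟨hl.1, ?_⟩), hl.2⟩, hv⟩
          rintro rfl; exact hl.2 hploc
    · simp only [if_neg hploc]
      refine ⟨?_, ?_, fun ν ν' h => and_congr (ih1s ν ν' h) (ih2s ν ν' h)⟩
      · intro ν hν
        rcases ih1a ν hν with h1 | ⟨l1, hl1, hv1⟩
        · rcases ih2a ν hν with h2 | ⟨l2, hl2, hv2⟩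
          · exact Or.inl ⟨h1, h2⟩
          · rw [Finset.mem_filter] at hl2
            refine Or.inr ⟨l2, Finset.mem_filter.mpr ⟨mem_Res.mpr (Or.inr ⟨hl2.1, ?_⟩), hl2.2⟩, hv2⟩
            rintro rfl; exact hploc hl2.2
        · rw [Finset.mem_filter] at hl1
          refine Or.inr ⟨l1, Finset.mem_filter.mpr ⟨mem_Res.mpr (Or.inl ⟨hl1.1, ?_⟩), hl1.2⟩, hv1⟩
          rintro rfl; exact hploc hl1.2
      · rintro ν hν ⟨h1, h2⟩
        obtain ⟨l1, hl1, hv1⟩ := ih1b ν hν h1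
        obtain ⟨l2, hl2, hv2⟩ := ih2b ν hν h2
        rw [Finset.mem_filter] at hl1 hl2
        cases hvp : ν p with
        | false =>
          refine ⟨l1, Finset.mem_filter.mpr ⟨mem_Res.mpr (Or.inl ⟨hl1.1, ?_⟩), hl1.2⟩, hv1⟩
          rintro rfl; rw [hv1] at hvp; simp at hvp
        | true =>
          refine ⟨l2, Finset.mem_filter.mpr ⟨mem_Res.mpr (Or.inr ⟨hl2.1, ?_⟩), hl2.2⟩, hv2⟩
          rintro rfl; rw [hv2] at hvp; simp at hvp
end

section
/- Theorem (DNF interpolants from proofs without unordered contexts): let T be a resolution derivation tree over (A, B) such that for every inner node with pivot q, if an immediate subtree of that node is itself an inner node with pivot p and q is B-local, then p is B-local (i.e., T has no unordered contexts for the dual algorithm McMillan'). Then the syntactic McMillan' interpolant Itp'(T) is a formula in DNF. -/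
/-- A variable is B-local if it occurs in `B` but not in `A`. -/
def BLocal {V : Type} [DecidableEq V] (A B : Finset (Clause V)) (v : V) : Prop :=
  v ∈ varsOf B ∧ v ∉ varsOf A

instance {V : Type} [DecidableEq V] (A B : Finset (Clause V)) :
    DecidablePred (BLocal A B) := fun _ => instDecidableAnd

/-- Propositional formulas. -/
inductive PForm (V : Type) where
  | top : PForm V
  | bot : PForm V
  | lit (v : V) (b : Bool) : PForm V
  | conj (f g : PForm V) : PForm V
  | disj (f g : PForm V) : PForm V

/-- `Subf f g` means `g` is a subformula of `f`. -/
inductive Subf {V : Type} : PForm V → PForm V → Prop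
  | refl (f : PForm V) : Subf f f
  | conj_left {f g h : PForm V} : Subf f h → Subf (.conj f g) h
  | conj_right {f g h : PForm V} : Subf g h → Subf (.conj f g) h
  | disj_left {f g h : PForm V} : Subf f h → Subf (.disj f g) h
  | disj_right {f g h : PForm V} : Subf g h → Subf (.disj f g) h

/-- A formula contains a disjunction. -/
def ContainsDisj {V : Type} (f : PForm V) : Prop :=
  ∃ g h : PForm V, Subf f (.disj g h)

/-- A formula is in DNF if no conjunction-subformula contains a disjunction. -/
def IsDNF {V : Type} (f : PForm V) : Prop :=
  ∀ f1 f2 : PForm V, Subf f (.conj f1 f2) → ¬ ContainsDisj f1 ∧ ¬ ContainsDisj f2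

/-- The conjunction of the complements of the literals in a list
(`⊤` if the list is empty). -/
def conjOfComplList {V : Type} : List (V × Bool) → PForm V
  | [] => .top
  | [l] => .lit l.1 (!l.2)
  | l :: l' :: ls => .conj (.lit l.1 (!l.2)) (conjOfComplList (l' :: ls))

/-- The syntactic McMillan' interpolant of a derivation tree. -/
noncomputable def Itp' {V : Type} [DecidableEq V] {A B : Finset (Clause V)} :
    {C : Clause V} → RTree A B C → PForm V
  | _, .leafA _ => .bot
  | C, .leafB _ => conjOfComplList (C.filter fun l => Shared A B l.1).toList
  | _, .node p _ _ T1 T2 =>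
      if BLocal A B p then .conj (Itp' T1) (Itp' T2) else .disj (Itp' T1) (Itp' T2)

/-- `T` is an inner node whose (root) pivot is `p`. -/
def IsInnerWithPivot {V : Type} [DecidableEq V] {A B : Finset (Clause V)} :
    {C : Clause V} → RTree A B C → V → Prop
  | _, .leafA _, _ => False
  | _, .leafB _, _ => False
  | _, .node q _ _ _ _, p => q = p

/-- `T` has no unordered contexts for the dual algorithm McMillan': for every
inner node with pivot `q`, if an immediate subtree is itself an inner node with
pivot `p` and `q` is B-local, then `p` is B-local. -/
def NoUnordered' {V : Type} [DecidableEq V] {A B : Finset (Clause V)} :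
    {C : Clause V} → RTree A B C → Prop
  | _, .leafA _ => True
  | _, .leafB _ => True
  | _, .node q _ _ T1 T2 =>
      NoUnordered' T1 ∧ NoUnordered' T2 ∧
      ∀ p : V, (IsInnerWithPivot T1 p ∨ IsInnerWithPivot T2 p) →
        BLocal A B q → BLocal A B p


theorem Subf.trans {V : Type} {f g h : PForm V} (h1 : Subf f g) (h2 : Subf g h) :
    Subf f h := by
  induction h1 with
  | refl => exact h2
  | conj_left _ ih => exact .conj_left (ih h2)
  | conj_right _ ih => exact .conj_right (ih h2)
  | disj_left _ ih => exact .disj_left (ih h2)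
  | disj_right _ ih => exact .disj_right (ih h2)

theorem dnf_of_noDisj {V : Type} {f : PForm V} (h : ¬ ContainsDisj f) : IsDNF f := by
  intro f1 f2 hsub
  constructor
  · rintro ⟨g, h', hg⟩
    exact h ⟨g, h', hsub.trans (.conj_left hg)⟩
  · rintro ⟨g, h', hg⟩
    exact h ⟨g, h', hsub.trans (.conj_right hg)⟩

theorem noDisj_conj {V : Type} {f g : PForm V} (hf : ¬ ContainsDisj f)
    (hg : ¬ ContainsDisj g) : ¬ ContainsDisj (PForm.conj f g) := by
  rintro ⟨a, b, hab⟩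
  cases hab with
  | conj_left h => exact hf ⟨a, b, h⟩
  | conj_right h => exact hg ⟨a, b, h⟩

theorem noDisj_atom {V : Type} {f : PForm V}
    (h : (∀ a b : PForm V, f ≠ .conj a b) ∧ (∀ a b : PForm V, f ≠ .disj a b)) :
    ¬ ContainsDisj f := by
  rintro ⟨a, b, hab⟩
  cases hab with
  | refl => exact h.2 a b rfl
  | conj_left _ => exact h.1 _ _ rfl
  | conj_right _ => exact h.1 _ _ rfl
  | disj_left _ => exact h.2 _ _ rfl
  | disj_right _ => exact h.2 _ _ rfl

theorem noDisj_conjOfComplList {V : Type} (L : List (V × Bool)) :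
    ¬ ContainsDisj (conjOfComplList L) := by
  match L with
  | [] => exact noDisj_atom ⟨fun _ _ => by simp [conjOfComplList], fun _ _ => by simp [conjOfComplList]⟩
  | [l] => exact noDisj_atom ⟨fun _ _ => by simp [conjOfComplList], fun _ _ => by simp [conjOfComplList]⟩
  | l :: l' :: ls =>
    exact noDisj_conj
      (noDisj_atom ⟨fun _ _ => by simp, fun _ _ => by simp⟩)
      (noDisj_conjOfComplList (l' :: ls))

theorem dnf_disj {V : Type} {f g : PForm V} (hf : IsDNF f) (hg : IsDNF g) :
    IsDNF (PForm.disj f g) := by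
  intro f1 f2 hsub
  cases hsub with
  | disj_left h => exact hf f1 f2 h
  | disj_right h => exact hg f1 f2 h

theorem mcmillan'_key {V : Type} [DecidableEq V]
    {A B : Finset (Clause V)} {C : Clause V} (T : RTree A B C)
    (hT : NoUnordered' T) :
    IsDNF (Itp' T) ∧
      ((∀ q, IsInnerWithPivot T q → BLocal A B q) → ¬ ContainsDisj (Itp' T)) := by
  induction T with
  | leafA h =>
    have hnd : ¬ ContainsDisj (Itp' (A := A) (B := B) (RTree.leafA h)) := by
      exact noDisj_atom ⟨fun _ _ => by simp [Itp'], fun _ _ => by simp [Itp']⟩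
    exact ⟨dnf_of_noDisj hnd, fun _ => hnd⟩
  | leafB h =>
    have hnd : ¬ ContainsDisj (Itp' (A := A) (B := B) (RTree.leafB h)) := by
      simpa [Itp'] using noDisj_conjOfComplList _
    exact ⟨dnf_of_noDisj hnd, fun _ => hnd⟩
  | node p h1 h2 T1 T2 ih1 ih2 =>
    obtain ⟨hT1, hT2, hord⟩ := hT
    obtain ⟨hd1, hn1⟩ := ih1 hT1
    obtain ⟨hd2, hn2⟩ := ih2 hT2
    by_cases hb : BLocal A B p
    · have hnd1 : ¬ ContainsDisj (Itp' T1) :=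
        hn1 fun q hq => hord q (Or.inl hq) hb
      have hnd2 : ¬ ContainsDisj (Itp' T2) :=
        hn2 fun q hq => hord q (Or.inr hq) hb
      have heq : Itp' (RTree.node p h1 h2 T1 T2) = .conj (Itp' T1) (Itp' T2) := by
        simp [Itp', hb]
      rw [heq]
      exact ⟨dnf_of_noDisj (noDisj_conj hnd1 hnd2), fun _ => noDisj_conj hnd1 hnd2⟩
    · have heq : Itp' (RTree.node p h1 h2 T1 T2) = .disj (Itp' T1) (Itp' T2) := by
        simp [Itp', hb]
      rw [heq]
      refine ⟨dnf_disj hd1 hd2, fun hall => ?_⟩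
      exact absurd (hall p (by simp [IsInnerWithPivot])) hb

/-- DNF interpolants from proofs without unordered contexts. -/
theorem mcmillan'_dnf_interpolant {V : Type} [DecidableEq V]
    (A B : Finset (Clause V)) (C : Clause V) (T : RTree A B C)
    (hT : NoUnordered' T) :
    IsDNF (Itp' T) := by
  exact (mcmillan'_key T hT).1
end

section
/- Correctness of the unit-reinsertion phase of PushdownUnits: let ℂ be a set of clauses and C a clause derivable by resolution from ℂ. Let S ⊆ C be a set of literals such that for every literal (v, b) ∈ S the complementary unit clause {(v, !b)} is derivable by resolution from ℂ. Then the clause C \ S is derivable by resolution from ℂ; in particular, the extra literals introduced at the global root by collecting unit subproofs can be eliminated by additional resolution steps with the collected unit clauses, restoring a legal proof with the original root. -/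
/-- Removing a single literal whose complementary unit clause is derivable. -/
lemma derivable_erase {V : Type} [DecidableEq V] {𝒞 : Set (Clause V)}
    {C : Clause V} (hC : Derivable 𝒞 C) (l : V × Bool) (hl : l ∈ C)
    (hu : Derivable 𝒞 ({(l.1, !l.2)} : Clause V)) :
    Derivable 𝒞 (C \ {l}) := by
  obtain ⟨v, b⟩ := l
  cases b with
  | true =>
      have h := Derivable.res (p := v) hC hu hl (by simp)
      simpa [Res] using h
  | false =>
      have h := Derivable.res (p := v) hu hC (by simp) hl
      simpa [Res] using h

/-- Correctness of the unit-reinsertion phase of PushdownUnits: literals whose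
complementary unit clauses are derivable can be eliminated from a derivable
clause by additional resolution steps. -/
theorem pushdown_units_reinsertion {V : Type} [DecidableEq V]
    (𝒞 : Set (Clause V)) (C : Clause V) (hC : Derivable 𝒞 C)
    (S : Finset (V × Bool)) (hS : S ⊆ C)
    (hunits : ∀ l ∈ S, Derivable 𝒞 ({(l.1, !l.2)} : Clause V)) :
    Derivable 𝒞 (C \ S) := by
  classical
  induction S using Finset.induction_on with
  | empty => simpa using hC
  | @insert l S hlS ih =>
      have hS' : S ⊆ C := fun x hx => hS (Finset.mem_insert_of_mem hx)
      have hD : Derivable 𝒞 (C \ S) :=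
        ih hS' (fun x hx => hunits x (Finset.mem_insert_of_mem hx))
      have hlCS : l ∈ C \ S :=
        Finset.mem_sdiff.mpr ⟨hS (Finset.mem_insert_self l S), hlS⟩
      have := derivable_erase hD l hlCS (hunits l (Finset.mem_insert_self l S))
      simpa [Finset.sdiff_insert, Finset.erase_eq] using this
end
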